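/- Let 0 < ρ ≤ 1 and let W = {(1/4, ρ/4), (3/4, ρ/4), (1/4, 3ρ/4), (3/4, 3ρ/4)} ⊆ Q be the regular 2×2 grid placement of four points. Then for every ε > 0 there exists a set B ⊆ Q with |B| = 4 such that μ({q ∈ Q : infDist(q, B) < infDist(q, W)}) > ρ·(1/2 + 1/128) − ε. (If Wilma plays a 2×2 grid, Barney can gain more than 50.78% of the board.) -/

import Mathlib

/-!
Barney puts one stone at the midpoint `(1/2, ρ/4)` of the two lower grid points and three stones
at horizontal distance `δ` outside the grid points `(1/4, ρ/4)`, `(1/4, 3ρ/4)`, `(3/4, ρ/4)`.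
The outer stones win the strip `x < 1/4 - δ` and the lower half of the strip `x > 3/4 + δ`. The
middle stone wins the lower half of the strip `3/8 < x < 5/8` and, above it, the triangle on that
base cut out by its bisectors with the two upper grid points, of height `1/(16ρ) ≥ ρ/16`. Already
the triangle of height `ρ/16` gives a total area of `ρ/2 + ρ/128 - 3δρ/2`, and `δ` can be taken
arbitrarily small.
-/

open MeasureTheory Metric Set
open scoped ENNReal

/-- The point `(x, y)` in the Euclidean plane. -/
noncomputable def pt (x y : ℝ) : EuclideanSpace ℝ (Fin 2) :=
  (WithLp.equiv 2 (Fin 2 → ℝ)).symm ![x, y]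

/-- The rectangular board `[0,1] × [0,ρ]`. -/
def board (ρ : ℝ) : Set (EuclideanSpace ℝ (Fin 2)) :=
  {q | q 0 ∈ Set.Icc (0:ℝ) 1 ∧ q 1 ∈ Set.Icc (0:ℝ) ρ}

local notation "ℝ²" => EuclideanSpace ℝ (Fin 2)

theorem infDist_lt_infDist_of_forall_dist_lt {α : Type*} [PseudoMetricSpace α] {B W : Set α}
    (hW : IsCompact W) (hWne : W.Nonempty) {q b : α} (hb : b ∈ B)
    (h : ∀ w ∈ W, dist q b < dist q w) : infDist q B < infDist q W := by
  obtain ⟨w, hw, hqw⟩ := hW.exists_infDist_eq_dist hWne q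
  calc infDist q B ≤ dist q b := infDist_le_dist_of_mem hb
    _ < dist q w := h w hw
    _ = infDist q W := hqw.symm

theorem pt_inj {a b c d : ℝ} : pt a b = pt c d ↔ a = c ∧ b = d := by
  refine ⟨fun h => ⟨congrArg (· 0) h, congrArg (· 1) h⟩, ?_⟩
  rintro ⟨rfl, rfl⟩
  rfl

theorem dist_pt_lt_dist_pt_iff (q : ℝ²) (a b c d : ℝ) :
    dist q (pt a b) < dist q (pt c d) ↔
      (q 0 - a) ^ 2 + (q 1 - b) ^ 2 < (q 0 - c) ^ 2 + (q 1 - d) ^ 2 := by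
  simp only [EuclideanSpace.dist_eq, Fin.sum_univ_two, Real.dist_eq, sq_abs]
  exact Real.sqrt_lt_sqrt_iff (by positivity)

def planeCoords : ℝ² ≃ᵐ ℝ × ℝ :=
  (MeasurableEquiv.toLp 2 (Fin 2 → ℝ)).symm.trans MeasurableEquiv.finTwoArrow

theorem planeCoords_apply (q : ℝ²) : planeCoords q = (q 0, q 1) := rfl

theorem measurePreserving_planeCoords : MeasurePreserving planeCoords volume volume :=
  (volume_preserving_finTwoArrow ℝ).comp
    (EuclideanSpace.volume_preserving_symm_measurableEquiv_toLp (Fin 2))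

/-- The open isosceles triangle with base `(a, b) × {c}` and apex `((a + b) / 2, c + h)`. -/
def isoscelesTriangle (a b c h : ℝ) : Set (ℝ × ℝ) :=
  {p | p.2 ∈ Ioo c (c + h) ∧
    p.1 ∈ Ioo (a + (b - a) / 2 * (p.2 - c) / h) (b - (b - a) / 2 * (p.2 - c) / h)}

theorem volume_isoscelesTriangle {a b c h : ℝ} (hab : a ≤ b) (hh : 0 < h) :
    volume (isoscelesTriangle a b c h) = ENNReal.ofReal ((b - a) * h / 2) := by
  set f : ℝ → ℝ := fun y => a + (b - a) / 2 * (y - c) / h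
  set g : ℝ → ℝ := fun y => b - (b - a) / 2 * (y - c) / h
  have hf : Continuous f := by fun_prop
  have hg : Continuous g := by fun_prop
  have hfg : ∀ y ∈ Ioo c (c + h), f y ≤ g y := by
    rintro y ⟨-, hy⟩
    have : (b - a) / 2 * (y - c) / h ≤ (b - a) / 2 := by
      rw [div_le_iff₀ hh]; nlinarith
    simp only [f, g]; linarith
  have hgf : g - f = fun y => (b - a) - (b - a) / h * (y - c) := by
    funext y; simp only [Pi.sub_apply, f, g]; ring
  change volume (Prod.swap ⁻¹' regionBetween f g (Ioo c (c + h))) = _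
  rw [Measure.volume_eq_prod, (Measure.measurePreserving_swap).measure_preimage
      (measurableSet_regionBetween hf.measurable hg.measurable measurableSet_Ioo).nullMeasurableSet,
    volume_regionBetween_eq_integral (hf.integrableOn_Icc.mono_set Ioo_subset_Icc_self)
      (hg.integrableOn_Icc.mono_set Ioo_subset_Icc_self) measurableSet_Ioo hfg,
    ← integral_Ioc_eq_integral_Ioo, ← intervalIntegral.integral_of_le (by linarith), hgf,
    intervalIntegral.integral_comp_sub_right (fun y => (b - a) - (b - a) / h * y),
    sub_self, add_sub_cancel_left, intervalIntegral.integral_sub intervalIntegrable_const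
      (intervalIntegral.intervalIntegrable_id.const_mul _), intervalIntegral.integral_const_mul,
    integral_id, intervalIntegral.integral_const]
  congr 1
  field_simp
  ring

theorem isoscelesTriangle_subset {a b c h : ℝ} (hab : a ≤ b) (hh : 0 < h) :
    isoscelesTriangle a b c h ⊆ Ioo a b ×ˢ Ioo c (c + h) := by
  rintro p ⟨⟨hc, hch⟩, ha, hb⟩
  have : 0 ≤ (b - a) / 2 * (p.2 - c) / h :=
    div_nonneg (mul_nonneg (by linarith) (by linarith)) hh.le
  exact ⟨⟨by linarith, by linarith⟩, hc, hch⟩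

theorem measurableSet_isoscelesTriangle (a b c h : ℝ) :
    MeasurableSet (isoscelesTriangle a b c h) := by
  unfold isoscelesTriangle
  measurability

theorem volume_Ioo_prod_Ioo (a b c d : ℝ) :
    volume (Ioo a b ×ˢ Ioo c d) = ENNReal.ofReal (b - a) * ENNReal.ofReal (d - c) := by
  rw [Measure.volume_eq_prod, Measure.prod_prod, Real.volume_Ioo, Real.volume_Ioo]

def grid (ρ : ℝ) : Set ℝ² :=
  {pt (1/4) (ρ/4), pt (3/4) (ρ/4), pt (1/4) (3*ρ/4), pt (3/4) (3*ρ/4)}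

def attack (ρ δ : ℝ) : Set ℝ² :=
  {pt (1/2) (ρ/4), pt (1/4 - δ) (ρ/4), pt (1/4 - δ) (3*ρ/4), pt (3/4 + δ) (ρ/4)}

def claimed (ρ : ℝ) (B W : Set ℝ²) : Set ℝ² :=
  {q | q ∈ board ρ ∧ infDist q B < infDist q W}

theorem mem_claimed_grid {ρ x y : ℝ} {B : Set ℝ²} {q : ℝ²} (hb : pt x y ∈ B)
    (hq : q ∈ board ρ)
    (h : ∀ c ∈ ({1/4, 3/4} : Set ℝ), ∀ d ∈ ({ρ/4, 3*ρ/4} : Set ℝ),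
      (q 0 - x) ^ 2 + (q 1 - y) ^ 2 < (q 0 - c) ^ 2 + (q 1 - d) ^ 2) :
    q ∈ claimed ρ B (grid ρ) := by
  refine ⟨hq, infDist_lt_infDist_of_forall_dist_lt (toFinite _).isCompact
    (insert_nonempty _ _) hb ?_⟩
  simp only [mem_insert_iff, mem_singleton_iff, forall_eq_or_imp, forall_eq,
    dist_pt_lt_dist_pt_iff]
  simp only [mem_insert_iff, mem_singleton_iff, forall_eq_or_imp, forall_eq] at h
  exact ⟨h.1.1, h.2.1, h.1.2, h.2.2⟩

theorem pt_mem_board {ρ x y : ℝ} : pt x y ∈ board ρ ↔ x ∈ Icc 0 1 ∧ y ∈ Icc 0 ρ := Iff.rfl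

theorem attack_subset_board {ρ δ : ℝ} (hρ : 0 < ρ) (hδ : 0 ≤ δ) (hδ' : δ ≤ 1/4) :
    attack ρ δ ⊆ board ρ := by
  simp only [attack, insert_subset_iff, singleton_subset_iff, pt_mem_board, mem_Icc]
  refine ⟨⟨?_, ?_⟩, ⟨?_, ?_⟩, ⟨?_, ?_⟩, ⟨?_, ?_⟩⟩ <;> exact ⟨by linarith, by linarith⟩

theorem ncard_attack {ρ δ : ℝ} (hρ : 0 < ρ) (hδ : 0 < δ) : (attack ρ δ).ncard = 4 := by
  rw [attack, ncard_insert_of_notMem, ncard_insert_of_notMem, ncard_pair]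
  · simp only [ne_eq, pt_inj, not_and]; intro h; linarith
  · simp only [mem_insert_iff, mem_singleton_iff, pt_inj, not_or, not_and]
    refine ⟨fun _ => ?_, fun h => ?_⟩ <;> linarith
  · simp only [mem_insert_iff, mem_singleton_iff, pt_inj, not_or, not_and]
    refine ⟨fun h => ?_, fun h => ?_, fun h => ?_⟩ <;> linarith

def attackRegion (ρ δ : ℝ) : Set (ℝ × ℝ) :=
  Ioo 0 (1/4 - δ) ×ˢ Ioo 0 ρ ∪ Ioo (3/8) (5/8) ×ˢ Ioo 0 (ρ/2) ∪
    isoscelesTriangle (3/8) (5/8) (ρ/2) (ρ/16) ∪ Ioo (3/4 + δ) 1 ×ˢ Ioo 0 (ρ/2)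

theorem preimage_attackRegion_subset_claimed {ρ δ : ℝ} (hρ : 0 < ρ) (hρ1 : ρ ≤ 1) (hδ : 0 < δ) :
    planeCoords ⁻¹' attackRegion ρ δ ⊆ claimed ρ (attack ρ δ) (grid ρ) := by
  simp only [attackRegion, preimage_union, union_subset_iff]
  refine ⟨⟨⟨?_, ?_⟩, ?_⟩, ?_⟩ <;> intro q hq <;>
    simp only [mem_preimage, planeCoords_apply, mem_prod, isoscelesTriangle, mem_ofPred_eq,
      mem_Ioo] at hq
  · obtain ⟨⟨hx0, hx1⟩, hy0, hy1⟩ := hq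
    have hq : q ∈ board ρ := ⟨⟨hx0.le, by linarith⟩, hy0.le, hy1.le⟩
    rcases le_total (q 1) (ρ/2) with hy | hy
    · refine mem_claimed_grid (x := 1/4 - δ) (y := ρ/4) (by simp [attack]) hq ?_
      rintro c (rfl | rfl) d (rfl | rfl) <;> nlinarith
    · refine mem_claimed_grid (x := 1/4 - δ) (y := 3*ρ/4) (by simp [attack]) hq ?_
      rintro c (rfl | rfl) d (rfl | rfl) <;> nlinarith
  · obtain ⟨⟨hx0, hx1⟩, hy0, hy1⟩ := hq
    have hq : q ∈ board ρ := ⟨⟨by linarith, by linarith⟩, hy0.le, by linarith⟩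
    refine mem_claimed_grid (x := 1/2) (y := ρ/4) (by simp [attack]) hq ?_
    rintro c (rfl | rfl) d (rfl | rfl) <;> nlinarith
  · obtain ⟨⟨hy0, hy1⟩, hx0, hx1⟩ := hq
    have ht : 0 < q 1 - ρ/2 := sub_pos.2 hy0
    -- the sides of the triangle are steeper than the bisectors because `ρ ≤ 1`
    have hslope : 2 * ρ * (q 1 - ρ/2) ≤ (5/8 - 3/8) / 2 * (q 1 - ρ/2) / (ρ/16) := by
      rw [le_div_iff₀ (by positivity)]
      nlinarith [mul_nonneg (mul_nonneg ht.le (sub_nonneg.2 hρ1)) (by linarith : (0:ℝ) ≤ 1 + ρ)]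
    have hq : q ∈ board ρ :=
      ⟨⟨by nlinarith [mul_pos hρ ht], by nlinarith [mul_pos hρ ht]⟩, by linarith, by linarith⟩
    refine mem_claimed_grid (x := 1/2) (y := ρ/4) (by simp [attack]) hq ?_
    rintro c (rfl | rfl) d (rfl | rfl) <;> nlinarith
  · obtain ⟨⟨hx0, hx1⟩, hy0, hy1⟩ := hq
    have hq : q ∈ board ρ := ⟨⟨by linarith, hx1.le⟩, hy0.le, by linarith⟩
    refine mem_claimed_grid (x := 3/4 + δ) (y := ρ/4) (by simp [attack]) hq ?_
    rintro c (rfl | rfl) d (rfl | rfl) <;> nlinarith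

theorem volume_attackRegion {ρ δ : ℝ} (hρ : 0 < ρ) (hδ : 0 ≤ δ) (hδ' : δ ≤ 1/4) :
    volume (attackRegion ρ δ) = ENNReal.ofReal (ρ/2 + ρ/128 - 3 * δ * ρ / 2) := by
  have hIoo : ∀ {a b c d : ℝ}, b ≤ c → Disjoint (Ioo a b) (Ioo c d) := fun h =>
    Ioo_disjoint_Ioo.2 ((min_le_left _ _).trans (h.trans (le_max_right _ _)))
  have htri := isoscelesTriangle_subset (a := 3/8) (b := 5/8) (c := ρ/2) (by norm_num)
    (by positivity : 0 < ρ/16)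
  rw [attackRegion, measure_union, measure_union, measure_union, volume_Ioo_prod_Ioo,
    volume_Ioo_prod_Ioo, volume_Ioo_prod_Ioo,
    volume_isoscelesTriangle (by norm_num) (by positivity),
    ← ENNReal.ofReal_mul (by linarith), ← ENNReal.ofReal_mul (by norm_num),
    ← ENNReal.ofReal_mul (by linarith), ← ENNReal.ofReal_add (by nlinarith) (by nlinarith),
    ← ENNReal.ofReal_add (by nlinarith) (by nlinarith),
    ← ENNReal.ofReal_add (by nlinarith) (by nlinarith)]
  · congr 1; ring
  · exact disjoint_prod.2 (Or.inl (hIoo (by linarith)))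
  · exact measurableSet_Ioo.prod measurableSet_Ioo
  · exact disjoint_union_left.2 ⟨(disjoint_prod.2 (Or.inl (hIoo (by linarith)))).mono_right htri,
      (disjoint_prod.2 (Or.inr (hIoo le_rfl))).mono_right htri⟩
  · exact measurableSet_isoscelesTriangle _ _ _ _
  · refine disjoint_union_left.2 ⟨disjoint_union_left.2 ⟨?_, ?_⟩, ?_⟩
    · exact disjoint_prod.2 (Or.inl (hIoo (by linarith)))
    · exact disjoint_prod.2 (Or.inl (hIoo (by linarith)))
    · exact (disjoint_prod.2 (Or.inl (hIoo (by linarith)))).mono_left htri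
  · exact measurableSet_Ioo.prod measurableSet_Ioo

theorem stmt_9 (ρ : ℝ) (hρ0 : 0 < ρ) (hρ1 : ρ ≤ 1)
    (W : Set (EuclideanSpace ℝ (Fin 2)))
    (hW : W = {pt (1/4) (ρ/4), pt (3/4) (ρ/4), pt (1/4) (3*ρ/4), pt (3/4) (3*ρ/4)})
    (ε : ℝ) (hε : 0 < ε) :
    ∃ B : Set (EuclideanSpace ℝ (Fin 2)), B ⊆ board ρ ∧ B.Finite ∧ B.ncard = 4 ∧
      volume {q | q ∈ board ρ ∧ infDist q B < infDist q W} >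
        ENNReal.ofReal (ρ * (1/2 + 1/128) - ε) := by
  set δ := min (ε / 2) (1 / 8)
  have hδ0 : 0 < δ := lt_min (by positivity) (by norm_num)
  have hδε : δ ≤ ε / 2 := min_le_left _ _
  have hδ8 : δ ≤ 1 / 8 := min_le_right _ _
  refine ⟨attack ρ δ, attack_subset_board hρ0 hδ0.le (by linarith), by simp [attack],
    ncard_attack hρ0 hδ0, ?_⟩
  subst hW
  calc ENNReal.ofReal (ρ * (1/2 + 1/128) - ε)
      < ENNReal.ofReal (ρ/2 + ρ/128 - 3 * δ * ρ / 2) :=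
        (ENNReal.ofReal_lt_ofReal_iff (by nlinarith)).2 (by nlinarith)
    _ = volume (planeCoords ⁻¹' attackRegion ρ δ) := by
        rw [measurePreserving_planeCoords.measure_preimage_equiv,
          volume_attackRegion hρ0 hδ0.le (by linarith)]
    _ ≤ volume (claimed ρ (attack ρ δ) (grid ρ)) :=
        measure_mono (preimage_attackRegion_subset_claimed hρ0 hρ1 hδ0)
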